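/- Ellipticity of the example noise: let σ_k(x) = (k^⊥/|k|^γ) e_k(x), k ∈ ℤ²\{0}, γ > 3, and for X = (x_1,…,x_N) ∈ (𝕋²)^N define A_k(X) = (σ_k(x_1),…,σ_k(x_N)) ∈ ℝ^{2N}. If the points x_1,…,x_N are pairwise distinct, then the vectors {A_k(X)}_{k ∈ ℤ²\{0}} span ℝ^{2N}. Equivalently, if V = (v_1,…,v_N) ∈ ℝ^{2N} satisfies Σ_{α=1}^N e_k(x_α)(k^⊥ · v_α) = 0 for all k ∈ ℤ²\{0}, then V = 0. -/
import Mathlib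


open Real

/-- The set `ℤ²₊` of "positive" frequencies. -/
def Zpos (k : ℤ × ℤ) : Prop := 0 < k.1 ∨ (k.1 = 0 ∧ 0 < k.2)

instance (k : ℤ × ℤ) : Decidable (Zpos k) := by unfold Zpos; infer_instance

/-- The trigonometric basis functions `e_k` (as `ℤ²`-periodic functions on `ℝ²`). -/
noncomputable def ee (k : ℤ × ℤ) (x : ℝ × ℝ) : ℝ :=
  if Zpos k then Real.sqrt 2 * Real.cos (2 * π * (k.1 * x.1 + k.2 * x.2))
  else Real.sqrt 2 * Real.sin (2 * π * (k.1 * x.1 + k.2 * x.2))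

/-- The vector fields `σ_k = (k^⊥/|k|^γ) e_k` on the torus. -/
noncomputable def sigma (γ : ℝ) (k : ℤ × ℤ) (x : ℝ × ℝ) : ℝ × ℝ :=
  ((k.2 : ℝ) / Real.sqrt ((k.1 : ℝ) ^ 2 + (k.2 : ℝ) ^ 2) ^ γ * ee k x,
    -(k.1 : ℝ) / Real.sqrt ((k.1 : ℝ) ^ 2 + (k.2 : ℝ) ^ 2) ^ γ * ee k x)


lemma lemD (s : Finset ℂ) : (∀ w ∈ s, w ≠ 0) → ∀ a b : ℂ → ℂ,
    (∀ n : ℕ, ∑ w ∈ s, ((n : ℂ) * a w + b w) * w ^ n = 0) →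
    ∀ w ∈ s, a w = 0 ∧ b w = 0 := by
  induction s using Finset.cons_induction with
  | empty => intro _ a b _ w hw; exact absurd hw (Finset.notMem_empty w)
  | cons w₀ t hw₀ ih =>
    intro hne a b h
    have hz0 : w₀ ≠ 0 := hne w₀ (Finset.mem_cons_self w₀ t)
    have e : ∀ n : ℕ, ∑ w ∈ t, ((n : ℂ) * a w + b w) * w ^ n
        = -(((n : ℂ) * a w₀ + b w₀) * w₀ ^ n) := by
      intro n
      have hn := h n
      rw [Finset.sum_cons] at hn
      linear_combination hn
    have h' : ∀ n : ℕ, ∑ w ∈ t,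
        ((n : ℂ) * (a w * (w - w₀) ^ 2)
          + (b w * (w - w₀) ^ 2 + 2 * a w * w * (w - w₀))) * w ^ n = 0 := by
      intro n
      have e2 := e (n + 2); have e1 := e (n + 1); have e0 := e n
      push_cast at e2 e1 e0
      calc ∑ w ∈ t, ((n : ℂ) * (a w * (w - w₀) ^ 2)
              + (b w * (w - w₀) ^ 2 + 2 * a w * w * (w - w₀))) * w ^ n
          = ∑ w ∈ t, (((((n : ℂ) + 2) * a w + b w) * w ^ (n + 2)
                - 2 * w₀ * ((((n : ℂ) + 1) * a w + b w) * w ^ (n + 1)))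
              + w₀ ^ 2 * (((n : ℂ) * a w + b w) * w ^ n)) := by
            refine Finset.sum_congr rfl fun w _ => by ring
        _ = ((∑ w ∈ t, (((n : ℂ) + 2) * a w + b w) * w ^ (n + 2))
              - ∑ w ∈ t, 2 * w₀ * ((((n : ℂ) + 1) * a w + b w) * w ^ (n + 1)))
              + ∑ w ∈ t, w₀ ^ 2 * (((n : ℂ) * a w + b w) * w ^ n) := by
            rw [Finset.sum_add_distrib, Finset.sum_sub_distrib]
        _ = 0 := by
            rw [← Finset.mul_sum, ← Finset.mul_sum, e2, e1, e0]
            ring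
    have ht : ∀ w ∈ t, a w = 0 ∧ b w = 0 := by
      intro w hw
      have h2 := ih (fun w hw => hne w (Finset.mem_cons_of_mem hw)) _ _ h' w hw
      have hwne : w - w₀ ≠ 0 := sub_ne_zero.mpr (by rintro rfl; exact hw₀ hw)
      have ha : a w = 0 := (mul_eq_zero.mp h2.1).resolve_right (pow_ne_zero 2 hwne)
      have hb' : b w * (w - w₀) ^ 2 = 0 := by linear_combination h2.2 - 2 * w * (w - w₀) * ha
      exact ⟨ha, (mul_eq_zero.mp hb').resolve_right (pow_ne_zero 2 hwne)⟩
    have hA : ∀ n : ℕ, ((n : ℂ) * a w₀ + b w₀) * w₀ ^ n = 0 := by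
      intro n
      have hn := e n
      rw [Finset.sum_eq_zero (fun w hw => by rw [(ht w hw).1, (ht w hw).2]; ring)] at hn
      linear_combination hn
    have hb0 : b w₀ = 0 := by simpa using hA 0
    have ha0 : a w₀ = 0 := by
      have h1 := hA 1
      rw [hb0] at h1
      simpa [hz0] using h1
    intro w hw
    rcases Finset.mem_cons.mp hw with rfl | hw
    · exact ⟨ha0, hb0⟩
    · exact ht w hw


lemma lemG {ι : Type*} (s : Finset ι) (w A B : ι → ℂ) (hw : ∀ i ∈ s, w i ≠ 0)
    (h : ∀ n : ℕ, ∑ i ∈ s, ((n : ℂ) * A i + B i) * w i ^ n = 0) (i : ι) (hi : i ∈ s)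
    [DecidablePred fun j => w j = w i] :
    ∑ j ∈ s.filter (fun j => w j = w i), A j = 0 := by
  classical
  set aa : ℂ → ℂ := fun z => ∑ j ∈ s.filter (fun j => w j = z), A j with haa
  set bb : ℂ → ℂ := fun z => ∑ j ∈ s.filter (fun j => w j = z), B j with hbb
  have himg : ∀ n : ℕ, ∑ z ∈ s.image w, ((n : ℂ) * aa z + bb z) * z ^ n = 0 := by
    intro n
    rw [Finset.sum_image' (fun i => ((n : ℂ) * A i + B i) * w i ^ n) ?_]
    · exact h n
    · intro c hc
      have : ∑ j ∈ s.filter (fun j => w j = w c), ((n : ℂ) * A j + B j) * w j ^ n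
          = ∑ j ∈ s.filter (fun j => w j = w c), ((n : ℂ) * A j + B j) * w c ^ n := by
        refine Finset.sum_congr rfl fun j hj => ?_
        rw [(Finset.mem_filter.mp hj).2]
      rw [this, ← Finset.sum_mul, Finset.sum_add_distrib, ← Finset.mul_sum]
  have key := lemD (s.image w)
    (fun z hz => by obtain ⟨j, hj, rfl⟩ := Finset.mem_image.mp hz; exact hw j hj)
    aa bb himg (w i) (Finset.mem_image_of_mem w hi)
  have := key.1
  rw [haa] at this
  simp only at this
  convert this using 2
  ext j
  simp [Finset.mem_filter]


noncomputable def charOf (y : ℝ × ℝ) : Multiplicative (ℤ × ℤ) →* ℂ where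
  toFun k := Complex.exp ((2 * π * (((Multiplicative.toAdd k).1 : ℝ) * y.1
      + ((Multiplicative.toAdd k).2 : ℝ) * y.2) : ℝ) * Complex.I)
  map_one' := by
    norm_num
  map_mul' k l := by
    rw [← Complex.exp_add]
    congr 1
    have h1 : (Multiplicative.toAdd (k * l)).1
        = (Multiplicative.toAdd k).1 + (Multiplicative.toAdd l).1 := rfl
    have h2 : (Multiplicative.toAdd (k * l)).2
        = (Multiplicative.toAdd k).2 + (Multiplicative.toAdd l).2 := rfl
    rw [h1, h2]
    push_cast
    ring

lemma charOf_apply (y : ℝ × ℝ) (k : ℤ × ℤ) :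
    charOf y (Multiplicative.ofAdd k)
      = Complex.exp (((2 * π * ((k.1 : ℝ) * y.1 + (k.2 : ℝ) * y.2) : ℝ) : ℂ) * Complex.I) := rfl

lemma charOf_ne_zero (y : ℝ × ℝ) (g : Multiplicative (ℤ × ℤ)) : charOf y g ≠ 0 :=
  Complex.exp_ne_zero _

/-- if two charOf's agree then the difference of the points is an integer vector -/
lemma charOf_inj {y z : ℝ × ℝ} (h : charOf y = charOf z) :
    ∃ m : ℤ × ℤ, y - z = ((m.1 : ℝ), (m.2 : ℝ)) := by
  have key : ∀ u v : ℝ, Complex.exp ((u : ℂ) * Complex.I) = Complex.exp ((v : ℂ) * Complex.I) →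
      ∃ n : ℤ, u - v = 2 * π * n := by
    intro u v huv
    rw [Complex.exp_eq_exp_iff_exists_int] at huv
    obtain ⟨n, hn⟩ := huv
    refine ⟨n, ?_⟩
    have h' : ((u : ℂ)) * Complex.I = ((v + n * (2 * π) : ℝ) : ℂ) * Complex.I := by
      rw [hn]; push_cast; ring
    have := mul_right_cancel₀ Complex.I_ne_zero h'
    have := Complex.ofReal_inj.mp this
    linarith [this]
  have h1 := congrFun (congrArg DFunLike.coe h) (Multiplicative.ofAdd ((1 : ℤ), (0 : ℤ)))
  have h2 := congrFun (congrArg DFunLike.coe h) (Multiplicative.ofAdd ((0 : ℤ), (1 : ℤ)))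
  rw [charOf_apply, charOf_apply] at h1 h2
  obtain ⟨n1, hn1⟩ := key _ _ h1
  obtain ⟨n2, hn2⟩ := key _ _ h2
  push_cast at hn1 hn2
  have hπ : (0:ℝ) < π := Real.pi_pos
  refine ⟨(n1, n2), ?_⟩
  have e1 : y.1 - z.1 = (n1 : ℝ) := by
    have : 2 * π * (y.1 - z.1 - n1) = 0 := by ring_nf; ring_nf at hn1; linarith
    rcases mul_eq_zero.mp this with h | h
    · nlinarith
    · linarith
  have e2 : y.2 - z.2 = (n2 : ℝ) := by
    have : 2 * π * (y.2 - z.2 - n2) = 0 := by ring_nf; ring_nf at hn2; linarith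
    rcases mul_eq_zero.mp this with h | h
    · nlinarith
    · linarith
  have : (y - z).1 = y.1 - z.1 := rfl
  exact Prod.ext (by simpa [this] using e1) (by simpa using e2)

/-- `k^⊥ · v_α` -/
def pf {N : ℕ} (V : Fin N → ℝ × ℝ) (α : Fin N) (k : ℤ × ℤ) : ℝ :=
  (k.2 : ℝ) * (V α).1 - (k.1 : ℝ) * (V α).2

/-- the phase `2π k·x_α` -/
noncomputable def θf {N : ℕ} (x : Fin N → ℝ × ℝ) (α : Fin N) (k : ℤ × ℤ) : ℝ :=
  2 * π * ((k.1 : ℝ) * (x α).1 + (k.2 : ℝ) * (x α).2)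

lemma main_core {N : ℕ} (x : Fin N → ℝ × ℝ)
    (hdist : ∀ α β : Fin N, α ≠ β → ¬ ∃ m : ℤ × ℤ, x α - x β = ((m.1 : ℝ), (m.2 : ℝ)))
    (V : Fin N → ℝ × ℝ)
    (hV : ∀ k : ℤ × ℤ, k ≠ 0 →
      ∑ α, ee k (x α) * ((k.2 : ℝ) * (V α).1 - (k.1 : ℝ) * (V α).2) = 0) :
    V = 0 := by
  classical
  have θneg : ∀ (α : Fin N) (k : ℤ × ℤ), θf x α (-k) = -(θf x α k) := by
    intro α k
    simp only [θf, Prod.fst_neg, Prod.snd_neg]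
    push_cast
    ring
  have pneg : ∀ (α : Fin N) (k : ℤ × ℤ), pf V α (-k) = -(pf V α k) := by
    intro α k
    simp only [pf, Prod.fst_neg, Prod.snd_neg]
    push_cast
    ring
  -- Step 1 : trig identities
  have sqrt2 : (Real.sqrt 2) ≠ 0 := by positivity
  have base : ∀ k : ℤ × ℤ, Zpos k →
      (∑ α, Real.cos (θf x α k) * pf V α k = 0) ∧
      (∑ α, Real.sin (θf x α k) * pf V α k = 0) := by
    intro k hk
    have hk0 : k ≠ 0 := by
      rintro rfl
      unfold Zpos at hk
      simp at hk
    have hnk0 : (-k) ≠ 0 := neg_ne_zero.mpr hk0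
    have hnk : ¬ Zpos (-k) := by
      unfold Zpos at hk ⊢
      simp only [Prod.fst_neg, Prod.snd_neg]
      omega
    have h1 := hV k hk0
    have h2 := hV (-k) hnk0
    simp only [ee, if_pos hk] at h1
    simp only [ee, if_neg hnk] at h2
    constructor
    · have key : ∑ α, Real.sqrt 2 * (Real.cos (θf x α k) * pf V α k) = 0 := by
        rw [← h1]
        refine Finset.sum_congr rfl fun α _ => ?_
        simp only [θf, pf]
        ring
      rw [← Finset.mul_sum] at key
      exact (mul_eq_zero.mp key).resolve_left sqrt2
    · have key : ∑ α, Real.sqrt 2 * (Real.sin (θf x α k) * pf V α k) = 0 := by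
        rw [← h2]
        refine Finset.sum_congr rfl fun α _ => ?_
        have hθ : 2 * π * (((-k).1 : ℝ) * (x α).1 + ((-k).2 : ℝ) * (x α).2) = -(θf x α k) := by
          simp only [θf, Prod.fst_neg, Prod.snd_neg]
          push_cast
          ring
        rw [hθ, Real.sin_neg]
        have hp : ((-k).2 : ℝ) * (V α).1 - ((-k).1 : ℝ) * (V α).2 = -(pf V α k) := by
          simp only [pf, Prod.fst_neg, Prod.snd_neg]
          push_cast
          ring
        rw [hp]
        ring
      rw [← Finset.mul_sum] at key
      exact (mul_eq_zero.mp key).resolve_left sqrt2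
  have trig : ∀ k : ℤ × ℤ,
      (∑ α, Real.cos (θf x α k) * pf V α k = 0) ∧
      (∑ α, Real.sin (θf x α k) * pf V α k = 0) := by
    intro k
    by_cases hk0 : k = 0
    · subst hk0
      constructor <;>
        exact Finset.sum_eq_zero fun α _ => by simp [pf]
    · have hcase : Zpos k ∨ Zpos (-k) := by
        have hne : k.1 ≠ 0 ∨ k.2 ≠ 0 := by
          by_contra hc
          push_neg at hc
          exact hk0 (Prod.ext hc.1 hc.2)
        unfold Zpos
        simp only [Prod.fst_neg, Prod.snd_neg]
        omega
      rcases hcase with h | h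
      · exact base k h
      · have hb := base (-k) h
        constructor
        · have : ∑ α, Real.cos (θf x α k) * pf V α k
              = -∑ α, Real.cos (θf x α (-k)) * pf V α (-k) := by
            rw [← Finset.sum_neg_distrib]
            refine Finset.sum_congr rfl fun α _ => ?_
            rw [θneg, pneg, Real.cos_neg]
            ring
          rw [this, hb.1, neg_zero]
        · have : ∑ α, Real.sin (θf x α k) * pf V α k
              = ∑ α, Real.sin (θf x α (-k)) * pf V α (-k) := by
            refine Finset.sum_congr rfl fun α _ => ?_
            rw [θneg, pneg, Real.sin_neg]
            ring
          rw [this, hb.2]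
  -- Step 2 : complex identity
  have cplx : ∀ k : ℤ × ℤ,
      ∑ α, ((pf V α k : ℝ) : ℂ) * charOf (x α) (Multiplicative.ofAdd k) = 0 := by
    intro k
    have h := trig k
    have expand : ∀ α : Fin N, ((pf V α k : ℝ) : ℂ) * charOf (x α) (Multiplicative.ofAdd k)
        = ((Real.cos (θf x α k) * pf V α k : ℝ) : ℂ)
          + ((Real.sin (θf x α k) * pf V α k : ℝ) : ℂ) * Complex.I := by
      intro α
      rw [charOf_apply]
      have harg : ((2 * π * ((k.1 : ℝ) * (x α).1 + (k.2 : ℝ) * (x α).2) : ℝ) : ℂ)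
          = ((θf x α k : ℝ) : ℂ) := by
        norm_cast
      rw [harg, Complex.exp_mul_I, ← Complex.ofReal_cos, ← Complex.ofReal_sin]
      push_cast
      ring
    rw [Finset.sum_congr rfl fun α _ => expand α, Finset.sum_add_distrib, ← Finset.sum_mul,
      ← Complex.ofReal_sum, ← Complex.ofReal_sum, h.1, h.2]
    simp
  -- Step 3 : injectivity of characters
  have hXinj : Function.Injective fun β : Fin N => charOf (x β) := by
    intro β γ hbg
    by_contra hne
    exact hdist β γ hne (charOf_inj hbg)
  -- Step 4 : vanishing of all pf V α m
  have hvan : ∀ (α₀ : Fin N) (m : ℤ × ℤ), pf V α₀ m = 0 := by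
    intro α₀ m
    have hsum : ∀ r : ℤ × ℤ,
        ∑ β ∈ Finset.univ.filter
            (fun β => charOf (x β) (Multiplicative.ofAdd m)
              = charOf (x α₀) (Multiplicative.ofAdd m)),
          ((pf V β m : ℝ) : ℂ) * charOf (x β) (Multiplicative.ofAdd r) = 0 := by
      intro r
      have hyp : ∀ n : ℕ, ∑ β,
          ((n : ℂ) * (((pf V β m : ℝ) : ℂ) * charOf (x β) (Multiplicative.ofAdd r))
            + ((pf V β r : ℝ) : ℂ) * charOf (x β) (Multiplicative.ofAdd r))
            * (charOf (x β) (Multiplicative.ofAdd m)) ^ n = 0 := by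
        intro n
        have hc := cplx ((n : ℤ) * m.1 + r.1, (n : ℤ) * m.2 + r.2)
        rw [← hc]
        refine Finset.sum_congr rfl fun β _ => ?_
        have hofadd : Multiplicative.ofAdd ((((n : ℤ) * m.1 + r.1, (n : ℤ) * m.2 + r.2)) : ℤ × ℤ)
            = (Multiplicative.ofAdd m) ^ n * Multiplicative.ofAdd r := by
          rw [← ofAdd_nsmul, ← ofAdd_add]
          congr 1
        rw [hofadd, map_mul, map_pow]
        have hplin : pf V β ((n : ℤ) * m.1 + r.1, (n : ℤ) * m.2 + r.2)
            = (n : ℝ) * pf V β m + pf V β r := by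
          simp only [pf]
          push_cast
          ring
        rw [hplin]
        push_cast
        ring
      exact lemG Finset.univ (fun β => charOf (x β) (Multiplicative.ofAdd m))
        (fun β => ((pf V β m : ℝ) : ℂ) * charOf (x β) (Multiplicative.ofAdd r))
        (fun β => ((pf V β r : ℝ) : ℂ) * charOf (x β) (Multiplicative.ofAdd r))
        (fun β _ => charOf_ne_zero _ _) hyp α₀ (Finset.mem_univ α₀)
    have li : LinearIndependent ℂ (fun β : Fin N => ⇑(charOf (x β))) :=
      (linearIndependent_monoidHom (Multiplicative (ℤ × ℤ)) ℂ).comp _ hXinj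
    have hzero := linearIndependent_iff'.mp li
      (Finset.univ.filter
        (fun β => charOf (x β) (Multiplicative.ofAdd m)
          = charOf (x α₀) (Multiplicative.ofAdd m)))
      (fun β => ((pf V β m : ℝ) : ℂ)) ?_ α₀ (by simp)
    · have h0 : ((pf V α₀ m : ℝ) : ℂ) = 0 := hzero
      exact_mod_cast h0
    · funext g
      rw [Finset.sum_apply]
      simp only [Pi.smul_apply, smul_eq_mul, Pi.zero_apply]
      have := hsum (Multiplicative.toAdd g)
      simpa using this
  -- Step 5 : conclude
  funext α
  have h1 := hvan α (0, 1)
  have h2 := hvan α (1, 0)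
  simp only [pf] at h1 h2
  norm_num at h1 h2
  show V α = 0
  apply Prod.ext <;> simp [h1, h2]

/-- ellipticity of the example noise: for pairwise distinct points
`x₁,…,x_N` on the torus, the vectors `A_k(X) = (σ_k(x₁),…,σ_k(x_N))` span
`ℝ^{2N}`; equivalently, if `Σ_α e_k(x_α) (k^⊥ · v_α) = 0` for all `k ≠ 0` then
`V = 0`. -/
theorem stmt_16 (γ : ℝ) (hγ : 3 < γ) (N : ℕ) (x : Fin N → ℝ × ℝ)
    (hdist : ∀ α β : Fin N, α ≠ β →
      ¬ ∃ m : ℤ × ℤ, x α - x β = ((m.1 : ℝ), (m.2 : ℝ))) :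
    Submodule.span ℝ
        (Set.range (fun k : ℤ × ℤ => (fun α => sigma γ k (x α) : Fin N → ℝ × ℝ))) = ⊤ ∧
      ∀ V : Fin N → ℝ × ℝ,
        (∀ k : ℤ × ℤ, k ≠ 0 →
          ∑ α, ee k (x α) * ((k.2 : ℝ) * (V α).1 - (k.1 : ℝ) * (V α).2) = 0) →
        V = 0 := by
  classical
  refine ⟨?_, fun V hV => main_core x hdist V hV⟩
  by_contra hne
  obtain ⟨f, hf0, hker⟩ :=
    Submodule.exists_dual_map_eq_bot_of_lt_top (lt_top_iff_ne_top.mpr hne) inferInstance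
  have hle : ∀ v ∈ Submodule.span ℝ
      (Set.range (fun k : ℤ × ℤ => (fun α => sigma γ k (x α) : Fin N → ℝ × ℝ))), f v = 0 := by
    intro v hv
    have hm : f v ∈ Submodule.map f (Submodule.span ℝ
        (Set.range (fun k : ℤ × ℤ => (fun α => sigma γ k (x α) : Fin N → ℝ × ℝ)))) :=
      Submodule.mem_map_of_mem hv
    rw [hker] at hm
    simpa using hm
  set Vf : Fin N → ℝ × ℝ :=
    fun α => (f (Pi.single α ((1 : ℝ), (0 : ℝ))), f (Pi.single α ((0 : ℝ), (1 : ℝ)))) with hVf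
  have hexp : ∀ U : Fin N → ℝ × ℝ,
      f U = ∑ α, ((U α).1 * (Vf α).1 + (U α).2 * (Vf α).2) := by
    intro U
    conv_lhs => rw [← Finset.univ_sum_single U]
    rw [map_sum]
    refine Finset.sum_congr rfl fun α _ => ?_
    have hU : Pi.single α (U α)
        = (U α).1 • (Pi.single α ((1 : ℝ), (0 : ℝ)) : Fin N → ℝ × ℝ)
          + (U α).2 • (Pi.single α ((0 : ℝ), (1 : ℝ)) : Fin N → ℝ × ℝ) := by
      funext β
      by_cases hβ : β = α
      · subst hβ
        simp only [Pi.single_eq_same, Pi.add_apply, Pi.smul_apply, Prod.smul_mk, Prod.mk_add_mk]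
        apply Prod.ext <;> simp
      · simp [Pi.single_eq_of_ne hβ]
    rw [hU, map_add, map_smul, map_smul, smul_eq_mul, smul_eq_mul, hVf]
  have hVzero : Vf = 0 := by
    apply main_core x hdist
    intro k hk
    have hmem : (fun α => sigma γ k (x α)) ∈ Submodule.span ℝ
        (Set.range (fun k : ℤ × ℤ => (fun α => sigma γ k (x α) : Fin N → ℝ × ℝ))) :=
      Submodule.subset_span ⟨k, rfl⟩
    have hfk : f (fun α => sigma γ k (x α)) = 0 := hle _ hmem
    rw [hexp] at hfk
    have hkk : (0 : ℝ) < (k.1 : ℝ) ^ 2 + (k.2 : ℝ) ^ 2 := by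
      have hne : k.1 ≠ 0 ∨ k.2 ≠ 0 := by
        by_contra hc
        push_neg at hc
        exact hk (Prod.ext hc.1 hc.2)
      rcases hne with h | h
      · have : (k.1 : ℝ) ≠ 0 := Int.cast_ne_zero.mpr h
        positivity
      · have : (k.2 : ℝ) ≠ 0 := Int.cast_ne_zero.mpr h
        positivity
    have hD : Real.sqrt ((k.1 : ℝ) ^ 2 + (k.2 : ℝ) ^ 2) ^ γ ≠ 0 :=
      ne_of_gt (Real.rpow_pos_of_pos (Real.sqrt_pos.mpr hkk) γ)
    show ∑ α, ee k (x α) * ((k.2 : ℝ) * (Vf α).1 - (k.1 : ℝ) * (Vf α).2) = 0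
    calc ∑ α, ee k (x α) * ((k.2 : ℝ) * (Vf α).1 - (k.1 : ℝ) * (Vf α).2)
        = Real.sqrt ((k.1 : ℝ) ^ 2 + (k.2 : ℝ) ^ 2) ^ γ
            * ∑ α, ((sigma γ k (x α)).1 * (Vf α).1 + (sigma γ k (x α)).2 * (Vf α).2) := by
          rw [Finset.mul_sum]
          refine Finset.sum_congr rfl fun α _ => ?_
          simp only [sigma]
          field_simp
          ring
      _ = 0 := by
          rw [hfk, mul_zero]
  have hc : ∀ α, (Vf α).1 = 0 ∧ (Vf α).2 = 0 := fun α => by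
    have h := congrFun hVzero α
    rw [Prod.ext_iff] at h
    simpa using h
  apply hf0
  refine LinearMap.ext fun U => ?_
  rw [hexp]
  show _ = (0 : (Fin N → ℝ × ℝ) →ₗ[ℝ] ℝ) U
  rw [LinearMap.zero_apply]
  exact Finset.sum_eq_zero fun α _ => by rw [(hc α).1, (hc α).2]; ring
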